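/- Let M = {(a,0) : a ≥ 1} ∪ {(0,a) : a ≥ 1} ∪ {(b,c) : 1 ≤ b ≤ c} (all rook, bishop and spider steps). Work in the polynomial ring ℚ[ρ], and for n ≥ 0 let p^w_n = Σ_π ρ^{k(π)}, where the sum is over all Catalan M-paths π from (0,0) to (n,n) and k(π) is the number of steps of π. Let P^w(t) = Σ_{n≥0} p^w_n tⁿ ∈ (ℚ[ρ])⟦t⟧. Then P^w satisfies the quadratic equation (1+ρ)t·((2ρ+1)t − ρ − 1)·(P^w)² − ((2ρ+1)t² − ρt − 1)·P^w + (t − 1) = 0 in (ℚ[ρ])⟦t⟧. -/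

import Mathlib

/-- x-coordinate of the `j`-th node of the path `p` (partial sum of first coordinates). -/
def xPart (p : List (ℕ × ℕ)) (j : ℕ) : ℕ := ((p.take j).map Prod.fst).sum

/-- y-coordinate of the `j`-th node of the path `p` (partial sum of second coordinates). -/
def yPart (p : List (ℕ × ℕ)) (j : ℕ) : ℕ := ((p.take j).map Prod.snd).sum

/-- `p` is an `S`-path from `(0,0)` to `(n,m)`. -/
def IsPath (S : Set (ℕ × ℕ)) (n m : ℕ) (p : List (ℕ × ℕ)) : Prop :=
  (∀ st ∈ p, st ∈ S) ∧ xPart p p.length = n ∧ yPart p p.length = m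

/-- `p` is Catalan: every node `(x, y)` satisfies `x ≤ y`. -/
def IsCatalan (p : List (ℕ × ℕ)) : Prop :=
  ∀ j ≤ p.length, xPart p j ≤ yPart p j

/-- The number of `S`-paths from `(0,0)` to `(n,m)`. -/
noncomputable def aCount (S : Set (ℕ × ℕ)) (n m : ℕ) : ℕ :=
  Set.ncard {p : List (ℕ × ℕ) | IsPath S n m p}

/-- The number of Catalan `S`-paths from `(0,0)` to `(n,n)`. -/
noncomputable def pCatalan (S : Set (ℕ × ℕ)) (n : ℕ) : ℕ :=
  Set.ncard {p : List (ℕ × ℕ) | IsPath S n n p ∧ IsCatalan p}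

/-- The set of all rook, bishop and spider steps. -/
def MSteps : Set (ℕ × ℕ) :=
  {st | (∃ a : ℕ, 1 ≤ a ∧ st = (a, 0)) ∨ (∃ a : ℕ, 1 ≤ a ∧ st = (0, a)) ∨
        (∃ b c : ℕ, 1 ≤ b ∧ b ≤ c ∧ st = (b, c))}

/-- Enumerator of Catalan `M`-paths to `(n,n)` by number of steps:
`Σ_π ρ^{k(π)}` in `ℚ[ρ]`. -/
noncomputable def pMW (n : ℕ) : Polynomial ℚ :=
  ∑ᶠ p ∈ {p : List (ℕ × ℕ) | IsPath MSteps n n p ∧ IsCatalan p},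
    (Polynomial.X : Polynomial ℚ) ^ p.length

/-- The variable `ρ` (weight of a step), as a constant power series. -/
noncomputable def ρM : PowerSeries (Polynomial ℚ) :=
  PowerSeries.C (Polynomial.X : Polynomial ℚ)

/-! Write `W(n, m)` for the weighted number of Catalan `M`-paths to `(n, m)` and
`F_d = ∑ₙ W(n, n + d) tⁿ`, so that `P^w = F_0`. Removing the last step of a path gives a recurrence
for `W`; summed along the diagonals it becomes a linear recurrence
`A F_{d+2} + B F_{d+1} + C F_d = 0` for `d ≥ 1` (with an inhomogeneous term at `d = 0`), plus a
linear relation between `F_0` and `F_1`. Since `A(0) = 0` and `B(0) = 1`, a solution of the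
recurrence is determined by its first term; applied to `F_{d+1} F_2 - F_{d+2} F_1`, which vanishes
at `d = 0`, this gives `F_2² = F_1 F_3`. Eliminating `F_1, F_2, F_3` from these relations leaves
the quadratic equation for `F_0`. -/

open Finset

section CatalanPaths

variable {S : Set (ℕ × ℕ)} {n m : ℕ}

def catalanPaths (S : Set (ℕ × ℕ)) (n m : ℕ) : Set (List (ℕ × ℕ)) :=
  {p | IsPath S n m p ∧ IsCatalan p}

noncomputable def catalanWeight {R : Type*} [CommSemiring R] (S : Set (ℕ × ℕ)) (r : R)
    (n m : ℕ) : R :=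
  ∑ᶠ p ∈ catalanPaths S n m, r ^ p.length

open Classical in
noncomputable def stepPredecessors (S : Set (ℕ × ℕ)) (n m : ℕ) : Finset (ℕ × ℕ) :=
  {u ∈ range (n + 1) ×ˢ range (m + 1) | (n - u.1, m - u.2) ∈ S}

lemma mem_stepPredecessors {u : ℕ × ℕ} :
    u ∈ stepPredecessors S n m ↔ u.1 ≤ n ∧ u.2 ≤ m ∧ (n - u.1, m - u.2) ∈ S := by
  simp only [stepPredecessors, mem_filter, mem_product, mem_range, Nat.lt_succ_iff, and_assoc]

lemma xPart_append_singleton {q : List (ℕ × ℕ)} {j : ℕ} (s : ℕ × ℕ) (hj : j ≤ q.length) :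
    xPart (q ++ [s]) j = xPart q j := by
  rw [xPart, xPart, List.take_append_of_le_length hj]

lemma yPart_append_singleton {q : List (ℕ × ℕ)} {j : ℕ} (s : ℕ × ℕ) (hj : j ≤ q.length) :
    yPart (q ++ [s]) j = yPart q j := by
  rw [yPart, yPart, List.take_append_of_le_length hj]

lemma xPart_append_singleton_length (q : List (ℕ × ℕ)) (s : ℕ × ℕ) :
    xPart (q ++ [s]) (q.length + 1) = xPart q q.length + s.1 := by
  simp [xPart]

lemma yPart_append_singleton_length (q : List (ℕ × ℕ)) (s : ℕ × ℕ) :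
    yPart (q ++ [s]) (q.length + 1) = yPart q q.length + s.2 := by
  simp [yPart]

lemma isPath_append_singleton {q : List (ℕ × ℕ)} {s : ℕ × ℕ} :
    IsPath S n m (q ++ [s]) ↔ s ∈ S ∧ s.1 ≤ n ∧ s.2 ≤ m ∧ IsPath S (n - s.1) (m - s.2) q := by
  simp only [IsPath, List.length_append, List.length_singleton, xPart_append_singleton_length,
    yPart_append_singleton_length, List.forall_mem_append, List.forall_mem_singleton]
  constructor
  · rintro ⟨⟨hq, hs⟩, hx, hy⟩
    exact ⟨hs, by omega, by omega, hq, by omega, by omega⟩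
  · rintro ⟨hs, h1, h2, hq, hx, hy⟩
    exact ⟨⟨hq, hs⟩, by omega, by omega⟩

lemma isCatalan_append_singleton {q : List (ℕ × ℕ)} {s : ℕ × ℕ} :
    IsCatalan (q ++ [s]) ↔ IsCatalan q ∧ xPart q q.length + s.1 ≤ yPart q q.length + s.2 := by
  simp only [IsCatalan, List.length_append, List.length_singleton]
  refine ⟨fun h => ⟨fun j hj => ?_, ?_⟩, fun ⟨hq, hs⟩ j hj => ?_⟩
  · rw [← xPart_append_singleton s hj, ← yPart_append_singleton s hj]
    exact h j (by omega)
  · rw [← xPart_append_singleton_length, ← yPart_append_singleton_length]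
    exact h _ le_rfl
  · obtain hj | rfl := Nat.le_succ_iff.mp hj
    · rw [xPart_append_singleton s hj, yPart_append_singleton s hj]
      exact hq j hj
    · rwa [xPart_append_singleton_length, yPart_append_singleton_length]

lemma append_singleton_mem_catalanPaths {q : List (ℕ × ℕ)} {s : ℕ × ℕ} :
    q ++ [s] ∈ catalanPaths S n m ↔
      s ∈ S ∧ s.1 ≤ n ∧ s.2 ≤ m ∧ n ≤ m ∧ q ∈ catalanPaths S (n - s.1) (m - s.2) := by
  simp only [catalanPaths, Set.mem_ofPred_eq, isPath_append_singleton, isCatalan_append_singleton]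
  constructor
  · rintro ⟨⟨hs, h1, h2, hq, hx, hy⟩, hc, hend⟩
    exact ⟨hs, h1, h2, by omega, ⟨hq, hx, hy⟩, hc⟩
  · rintro ⟨hs, h1, h2, hnm, ⟨hq, hx, hy⟩, hc⟩
    exact ⟨⟨hs, h1, h2, hq, hx, hy⟩, hc, by omega⟩

lemma nil_mem_catalanPaths : [] ∈ catalanPaths S n m ↔ n = 0 ∧ m = 0 := by
  simp [catalanPaths, IsPath, IsCatalan, xPart, yPart, eq_comm]

lemma catalanPaths_eq_empty_of_lt (h : m < n) : catalanPaths S n m = ∅ :=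
  Set.eq_empty_of_forall_notMem fun _ ⟨⟨_, hx, hy⟩, hc⟩ => by
    have := hc _ le_rfl
    omega

lemma catalanPaths_eq_union (h : n ≤ m) :
    catalanPaths S n m = {p | p = [] ∧ n = 0 ∧ m = 0} ∪
      ⋃ u ∈ (stepPredecessors S n m : Set (ℕ × ℕ)),
        (· ++ [(n - u.1, m - u.2)]) '' catalanPaths S u.1 u.2 := by
  ext p
  simp only [Set.mem_union, Set.mem_ofPred_eq, Set.mem_iUnion, Set.mem_image, Finset.mem_coe,
    mem_stepPredecessors, exists_prop]
  obtain rfl | ⟨q, s, rfl⟩ := List.eq_nil_or_concat' p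
  · simp [nil_mem_catalanPaths]
  simp only [append_singleton_mem_catalanPaths, List.append_eq_nil_iff, List.cons_ne_self,
    and_false, false_and, false_or]
  constructor
  · rintro ⟨hs, h1, h2, -, hq⟩
    refine ⟨(n - s.1, m - s.2), ⟨by omega, by omega, ?_⟩, q, hq, ?_⟩
    · rwa [Nat.sub_sub_self h1, Nat.sub_sub_self h2]
    · rw [Nat.sub_sub_self h1, Nat.sub_sub_self h2]
  · rintro ⟨u, ⟨h1, h2, hs⟩, q', hq', heq⟩
    obtain ⟨rfl, rfl⟩ : q' = q ∧ (n - u.1, m - u.2) = s := by simpa using heq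
    refine ⟨hs, by omega, by omega, h, ?_⟩
    rwa [Nat.sub_sub_self h1, Nat.sub_sub_self h2]

lemma catalanPaths_finite (hS : (0, 0) ∉ S) (n m : ℕ) : (catalanPaths S n m).Finite := by
  induction h : n + m using Nat.strong_induction_on generalizing n m with
  | _ N ih =>
  obtain hlt | hle := lt_or_ge m n
  · simp [catalanPaths_eq_empty_of_lt hlt]
  rw [catalanPaths_eq_union hle]
  refine ((Set.finite_singleton []).subset ?_).union ((finite_toSet _).biUnion fun u hu => ?_)
  · rintro p ⟨rfl, -⟩
    rfl
  obtain ⟨h1, h2, hs⟩ := mem_stepPredecessors.mp hu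
  have hlt : u.1 + u.2 < N := by
    by_contra
    exact hS (by rwa [show n - u.1 = 0 by omega, show m - u.2 = 0 by omega] at hs)
  exact (ih _ hlt u.1 u.2 rfl).image _

variable {R : Type*} [CommSemiring R]

theorem catalanWeight_eq (hS : (0, 0) ∉ S) (r : R) (h : n ≤ m) :
    catalanWeight S r n m = (if n = 0 ∧ m = 0 then 1 else 0) +
      r * ∑ u ∈ stepPredecessors S n m, catalanWeight S r u.1 u.2 := by
  have hdisj : Disjoint {p : List (ℕ × ℕ) | p = [] ∧ n = 0 ∧ m = 0}
      (⋃ u ∈ (stepPredecessors S n m : Set (ℕ × ℕ)),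
        (· ++ [(n - u.1, m - u.2)]) '' catalanPaths S u.1 u.2) := by
    refine Set.disjoint_left.mpr ?_
    rintro p ⟨rfl, -⟩ hp
    simp at hp
  have hpair : (stepPredecessors S n m : Set (ℕ × ℕ)).PairwiseDisjoint
      fun u => (· ++ [(n - u.1, m - u.2)]) '' catalanPaths S u.1 u.2 := by
    intro u hu v hv huv
    refine Set.disjoint_left.mpr ?_
    rintro p ⟨q, -, rfl⟩ ⟨q', -, heq⟩
    obtain ⟨hu1, hu2, -⟩ := mem_stepPredecessors.mp hu
    obtain ⟨hv1, hv2, -⟩ := mem_stepPredecessors.mp hv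
    obtain ⟨-, h1, h2⟩ : q' = q ∧ n - v.1 = n - u.1 ∧ m - v.2 = m - u.2 := by simpa using heq
    exact huv (Prod.ext (by omega) (by omega))
  rw [catalanWeight, catalanPaths_eq_union h,
    finsum_mem_union hdisj ((Set.finite_singleton []).subset (fun p hp => hp.1))
      ((finite_toSet _).biUnion fun u _ => (catalanPaths_finite hS _ _).image _),
    finsum_mem_biUnion hpair (finite_toSet _) fun u _ => (catalanPaths_finite hS _ _).image _,
    finsum_mem_coe_finset, mul_sum]
  congr 1
  · split_ifs with h0 <;> simp [h0]
  · refine sum_congr rfl fun u _ => ?_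
    rw [finsum_mem_image (List.append_left_injective _).injOn, catalanWeight,
      mul_finsum_mem' _ _ (catalanPaths_finite hS _ _)]
    simp [pow_succ, mul_comm]

lemma catalanWeight_of_lt (r : R) (h : m < n) : catalanWeight S r n m = 0 := by
  rw [catalanWeight, catalanPaths_eq_empty_of_lt h, finsum_mem_empty]

lemma sum_range_add_catalanWeight (r : R) (j d : ℕ) :
    ∑ k ∈ range (j + d), catalanWeight S r j k = ∑ e ∈ range d, catalanWeight S r j (j + e) := by
  rw [sum_range_add, sum_eq_zero fun k hk => catalanWeight_of_lt r (mem_range.mp hk), zero_add]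

end CatalanPaths

section MSteps

lemma mk_mem_MSteps {a b : ℕ} : (a, b) ∈ MSteps ↔ 0 < a + b ∧ (b = 0 ∨ a ≤ b) := by
  simp only [MSteps, Set.mem_ofPred_eq, Prod.mk.injEq]
  constructor
  · rintro (⟨a, ha, rfl, rfl⟩ | ⟨b, hb, rfl, rfl⟩ | ⟨b, c, hb, hbc, rfl, rfl⟩) <;> omega
  · rintro ⟨hpos, rfl | hab⟩
    · exact Or.inl ⟨a, by omega, rfl, rfl⟩
    · obtain rfl | ha := Nat.eq_zero_or_pos a
      · exact Or.inr (Or.inl ⟨b, by omega, rfl, rfl⟩)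
      · exact Or.inr (Or.inr ⟨a, b, ha, hab, rfl, rfl⟩)

lemma sum_stepPredecessors_MSteps {M : Type*} [AddCommMonoid M] (f : ℕ → ℕ → M) (n d : ℕ) :
    ∑ u ∈ stepPredecessors MSteps n (n + d), f u.1 u.2 =
      ∑ j ∈ range n, (f j (n + d) + ∑ k ∈ range (j + (d + 1)), f j k) +
        ∑ k ∈ range (n + d), f n k := by
  rw [stepPredecessors, sum_filter, sum_product, sum_range_succ]
  congr 1
  · refine sum_congr rfl fun j hj => ?_
    rw [mem_range] at hj
    rw [sum_range_succ, if_pos (mk_mem_MSteps.mpr (by omega)), add_comm, ← sum_filter]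
    congr 2
    ext k
    simp only [mem_filter, mem_range, mk_mem_MSteps]
    omega
  · rw [sum_range_succ, if_neg (by simp [mk_mem_MSteps]), add_zero, ← sum_filter]
    congr 1
    ext k
    simp only [mem_filter, mem_range, mk_mem_MSteps]
    omega

theorem catalanWeight_MSteps_diag {R : Type*} [CommSemiring R] (r : R) (n d : ℕ) :
    catalanWeight MSteps r n (n + d) = (if n = 0 ∧ d = 0 then 1 else 0) +
      r * (∑ j ∈ range n, catalanWeight MSteps r j (n + d) +
        ∑ e ∈ range d, catalanWeight MSteps r n (n + e) +
        ∑ j ∈ range n, ∑ e ∈ range (d + 1), catalanWeight MSteps r j (j + e)) := by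
  rw [catalanWeight_eq (by simp [mk_mem_MSteps]) r (by omega),
    sum_stepPredecessors_MSteps (catalanWeight MSteps r), sum_add_distrib]
  simp only [sum_range_add_catalanWeight]
  have hcorner : (n = 0 ∧ n + d = 0) ↔ (n = 0 ∧ d = 0) := by omega
  simp only [hcorner]
  ring

end MSteps

open PowerSeries

lemma coeff_X_mul_mul_mk_one {R : Type*} [CommSemiring R] (Y : R⟦X⟧) (n : ℕ) :
    coeff n (X * Y * PowerSeries.mk 1) = ∑ j ∈ range n, coeff j Y := by
  cases n with
  | zero => simp
  | succ n =>
    rw [mul_assoc, coeff_succ_X_mul, coeff_mul,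
      Nat.sum_antidiagonal_eq_sum_range_succ (fun i j => coeff i Y * coeff j (PowerSeries.mk 1))]
    simp

lemma PowerSeries.eq_zero_of_recurrence {R : Type*} [CommRing R] {A B C : R⟦X⟧}
    (hA : constantCoeff A = 0) (hB : IsUnit B) {G : ℕ → R⟦X⟧} (h0 : G 0 = 0)
    (hG : ∀ d, A * G (d + 2) + B * G (d + 1) + C * G d = 0) (d : ℕ) : G d = 0 := by
  have hXA : X ∣ A := X_dvd_iff.mpr hA
  have hdvd : ∀ n d, (X : R⟦X⟧) ^ n ∣ G d := by
    intro n
    induction n with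
    | zero => simp
    | succ n ih =>
      intro d
      induction d with
      | zero => simp [h0]
      | succ d ihd =>
        rw [← hB.dvd_mul_left, show B * G (d + 1) = -(A * G (d + 2) + C * G d) by
          linear_combination hG d, dvd_neg]
        exact dvd_add (pow_succ' (X : R⟦X⟧) n ▸ mul_dvd_mul hXA (ih _)) (ihd.mul_left C)
  ext n
  simpa using X_pow_dvd_iff.mp (hdvd (n + 1) d) n n.lt_succ_self

lemma quadratic_of_three_term {K : Type*} [CommRing K] [IsDomain K] {t r F0 F1 F2 F3 : K}
    (hr : r ≠ 0) (ht : t ≠ 1)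
    (h01 : (r * t ^ 2 - (1 + r) * t * (1 - t)) * F1 = (1 - t) * (1 - F0))
    (h0 : (r * t ^ 2 - (1 + r) * t * (1 - t)) * F2 +
      ((1 - t) * (1 + (1 + 2 * r) * t) - r * t) * F1 - (1 + r) * (1 - t) * F0 + (1 - t) = 0)
    (h1 : (r * t ^ 2 - (1 + r) * t * (1 - t)) * F3 +
      ((1 - t) * (1 + (1 + 2 * r) * t) - r * t) * F2 - (1 + r) * (1 - t) * F1 = 0)
    (hsq : F2 ^ 2 = F1 * F3) :
    (1 + r) * t * ((2 * r + 1) * t - r - 1) * F0 ^ 2 -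
      ((2 * r + 1) * t ^ 2 - r * t - 1) * F0 + (t - 1) = 0 := by
  set A := r * t ^ 2 - (1 + r) * t * (1 - t)
  set B := (1 - t) * (1 + (1 + 2 * r) * t) - r * t
  set Z := -(1 + r) * (1 - t) * F0 + (1 - t)
  -- Eliminate `F3` by `hsq`, then `F2` by `h0` and `F1` by `h01`; the quadratic survives with
  -- the factor `r (1 - t)²`.
  have key : r * (1 - t) ^ 2 * ((1 + r) * t * ((2 * r + 1) * t - r - 1) * F0 ^ 2 -
      ((2 * r + 1) * t ^ 2 - r * t - 1) * F0 + (t - 1)) = 0 := by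
    linear_combination A * (A * (F1 * h1 + A * hsq) - (A * F2 - Z) * h0) -
      (B * Z - (1 + r) * (1 - t) * (A * F1 + (1 - t) * (1 - F0))) * h01
  simpa [hr, sub_eq_zero, Ne.symm ht] using key

section Series

variable {R : Type*} [CommRing R] (r : R)

noncomputable def diagSeries (d : ℕ) : R⟦X⟧ :=
  mk fun n => catalanWeight MSteps r n (n + d)

noncomputable def rowSeries (d : ℕ) : R⟦X⟧ :=
  mk fun n => ∑ j ∈ range n, catalanWeight MSteps r j (n + d)

lemma diagSeries_eq (d : ℕ) :
    diagSeries r d = (if d = 0 then 1 else 0) +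
      C r * (rowSeries r d + ∑ e ∈ range d, diagSeries r e +
        X * (∑ e ∈ range (d + 1), diagSeries r e) * PowerSeries.mk 1) := by
  ext n
  have hδ : coeff n (if d = 0 then (1 : R⟦X⟧) else 0) = if n = 0 ∧ d = 0 then 1 else 0 := by
    split_ifs <;> simp_all [coeff_one]
  simp only [map_add, coeff_C_mul, coeff_X_mul_mul_mk_one, map_sum, hδ, diagSeries, rowSeries,
    coeff_mk]
  exact catalanWeight_MSteps_diag r n d

lemma rowSeries_eq (d : ℕ) : rowSeries r d = X * (diagSeries r (d + 1) + rowSeries r (d + 1)) := by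
  ext n
  cases n with
  | zero => simp [rowSeries]
  | succ n =>
    rw [coeff_succ_X_mul]
    simp only [rowSeries, diagSeries, map_add, coeff_mk, sum_range_succ,
      show n + 1 + d = n + (d + 1) by omega]
    exact add_comm _ _

lemma diagSeries_first_order (d : ℕ) :
    (1 - X) * (diagSeries r d - (1 + C r) * X * diagSeries r (d + 1) - (if d = 0 then 1 else 0) -
        C r * (∑ e ∈ range d, diagSeries r e - X * ∑ e ∈ range (d + 1), diagSeries r e)) =
      C r * X *
        (∑ e ∈ range (d + 1), diagSeries r e - X * ∑ e ∈ range (d + 2), diagSeries r e) := by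
  have hd := diagSeries_eq r d
  have hd1 := diagSeries_eq r (d + 1)
  rw [if_neg d.succ_ne_zero, zero_add] at hd1
  linear_combination (1 - X) * (hd - X * hd1 + C r * rowSeries_eq r d) +
    C r * X * (∑ e ∈ range (d + 1), diagSeries r e - X * ∑ e ∈ range (d + 2), diagSeries r e) *
      mk_one_mul_one_sub_eq_one R

lemma diagSeries_three_term (d : ℕ) :
    (C r * X ^ 2 - (1 + C r) * X * (1 - X)) * diagSeries r (d + 2) +
      ((1 - X) * (1 + (1 + 2 * C r) * X) - C r * X) * diagSeries r (d + 1) -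
      (1 + C r) * (1 - X) * diagSeries r d + (if d = 0 then 1 - X else 0) = 0 := by
  have h := diagSeries_first_order r d
  have h1 := diagSeries_first_order r (d + 1)
  rw [if_neg d.succ_ne_zero] at h1
  simp only [sum_range_succ] at h h1
  split_ifs at h ⊢ <;> linear_combination h1 - h

lemma diagSeries_two_sq : diagSeries r 2 ^ 2 = diagSeries r 1 * diagSeries r 3 := by
  have hG := PowerSeries.eq_zero_of_recurrence (A := C r * X ^ 2 - (1 + C r) * X * (1 - X))
    (B := (1 - X) * (1 + (1 + 2 * C r) * X) - C r * X) (C := -((1 + C r) * (1 - X)))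
    (G := fun d => diagSeries r (d + 1) * diagSeries r 2 - diagSeries r (d + 2) * diagSeries r 1)
    (by simp) (isUnit_iff_constantCoeff.mpr (by simp)) (by ring) (fun d => by
      have h1 := diagSeries_three_term r (d + 1)
      have h2 := diagSeries_three_term r (d + 2)
      rw [if_neg (by omega : d + 1 ≠ 0)] at h1
      rw [if_neg (by omega : d + 2 ≠ 0)] at h2
      simp only [add_assoc, Nat.reduceAdd] at h1 h2 ⊢
      linear_combination diagSeries r 2 * h1 - diagSeries r 1 * h2) 1
  linear_combination hG

theorem diagSeries_zero_quadratic [IsDomain R] (hr : r ≠ 0) :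
    (1 + C r) * X * ((2 * C r + 1) * X - C r - 1) * diagSeries r 0 ^ 2 -
      ((2 * C r + 1) * X ^ 2 - C r * X - 1) * diagSeries r 0 + (X - 1) = 0 := by
  have h01 := diagSeries_first_order r 0
  have h0 := diagSeries_three_term r 0
  have h1 := diagSeries_three_term r 1
  simp only [sum_range_succ, sum_range_zero, zero_add, Nat.reduceAdd, one_ne_zero, ↓reduceIte,
    add_zero] at h01 h0 h1
  exact quadratic_of_three_term ((map_ne_zero_iff _ C_injective).mpr hr)
    (fun h => by simpa using congrArg constantCoeff h) (by linear_combination h01) h0 h1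
    (diagSeries_two_sq r)

end Series

theorem stmt18 (Pw : PowerSeries (Polynomial ℚ))
    (hP : Pw = PowerSeries.mk pMW) :
    (1 + ρM) * PowerSeries.X * ((2 * ρM + 1) * PowerSeries.X - ρM - 1) * Pw ^ 2 -
      ((2 * ρM + 1) * PowerSeries.X ^ 2 - ρM * PowerSeries.X - 1) * Pw +
      (PowerSeries.X - 1) = 0 := by
  subst hP
  exact diagSeries_zero_quadratic _ Polynomial.X_ne_zero
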